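/- arXiv:2304.14288 — 8 statements merged into one kernel-verified Lean document; each statement's English description precedes it below -/
import Mathlib

section
/- First transformed dynamical equation: suppose ρ ≠ 0, and suppose the differentiable functions T_U, T_I, V : ℝ → ℝ satisfy, for all t ∈ ℝ, T_U'(t) = λ − ρ·T_U(t) − η(t)·T_U(t)·V(t) and T_I'(t) = η(t)·T_U(t)·V(t) − δ·T_I(t). Fix τ ∈ ℝ and t ∈ ℝ, and suppose the denominator Dη(t) := V(t)·((T_I(t)·δ + T_U(t)·ρ)·exp(ρ·τ) − T_I(t)·δ) is nonzero. Then the function s ↦ TUτ(s) := T_U(s) + T_I(s) − (T_I(s)/ρ)·(δ·exp(−ρ·τ) + ρ − δ) has derivative at t equal to λ − ρ·TUτ(t) − ητ(t)·TUτ(t)·V(t), where ητ(t) := (η(t)·T_U(t)·V(t)·ρ·exp(ρ·τ) + (T_I(t)·δ² − T_I(t)·δ·ρ − η(t)·T_U(t)·V(t)·δ)·(exp(ρ·τ) − 1)) / Dη(t). -/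
/-- First transformed dynamical equation: the transformed state `TUτ` satisfies
`TUτ' = λ − ρ·TUτ − ητ·TUτ·V` at `t`. -/
theorem first_transformed_equation (lam δ ρ : ℝ) (η TU TI V : ℝ → ℝ) (hρ : ρ ≠ 0)
    (hTU : ∀ t, HasDerivAt TU (lam - ρ * TU t - η t * TU t * V t) t)
    (hTI : ∀ t, HasDerivAt TI (η t * TU t * V t - δ * TI t) t)
    (τ t : ℝ)
    (hD : V t * ((TI t * δ + TU t * ρ) * Real.exp (ρ * τ) - TI t * δ) ≠ 0) :
    HasDerivAt
      (fun s => TU s + TI s - (TI s / ρ) * (δ * Real.exp (-ρ * τ) + ρ - δ))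
      (lam - ρ * (TU t + TI t - (TI t / ρ) * (δ * Real.exp (-ρ * τ) + ρ - δ))
        - ((η t * TU t * V t * ρ * Real.exp (ρ * τ)
              + (TI t * δ ^ 2 - TI t * δ * ρ - η t * TU t * V t * δ)
                * (Real.exp (ρ * τ) - 1))
            / (V t * ((TI t * δ + TU t * ρ) * Real.exp (ρ * τ) - TI t * δ)))
          * (TU t + TI t - (TI t / ρ) * (δ * Real.exp (-ρ * τ) + ρ - δ)) * V t)
      t := by
  have h := ((hTU t).add (hTI t)).sub
    ((((hTI t).div_const ρ)).mul_const (δ * Real.exp (-ρ * τ) + ρ - δ))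
  convert h using 1
  case e'_4 => rfl
  case e'_5 => rfl
  case e'_8 => rfl
  have hE : Real.exp (ρ * τ) ≠ 0 := Real.exp_ne_zero _
  have hneg : Real.exp (-ρ * τ) = (Real.exp (ρ * τ))⁻¹ := by
    rw [← Real.exp_neg]; ring_nf
  rw [hneg]
  have hV := left_ne_zero_of_mul hD
  have hQ := right_ne_zero_of_mul hD
  have hQ' : Real.exp (ρ * τ) * (TI t * δ + ρ * TU t) - TI t * δ ≠ 0 := by
    convert hQ using 1; ring
  field_simp
  ring_nf
end

section
/- Second transformed dynamical equation: suppose ρ ≠ 0 and the denominator Dδ := (ρ − δ)·exp(ρ·τ) + δ is nonzero, and suppose the differentiable functions T_U, T_I, V : ℝ → ℝ satisfy, for all t ∈ ℝ, T_I'(t) = η(t)·T_U(t)·V(t) − δ·T_I(t). Fix τ ∈ ℝ and t ∈ ℝ with Dη(t) := V(t)·((T_I(t)·δ + T_U(t)·ρ)·exp(ρ·τ) − T_I(t)·δ) ≠ 0. Then the function s ↦ TIτ(s) := (T_I(s)/ρ)·(δ·exp(−ρ·τ) + ρ − δ) has derivative at t equal to ητ(t)·TUτ(t)·V(t) − δτ·TIτ(t),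 where δτ := δ·ρ/Dδ, TUτ(t) := T_U(t) + T_I(t) − (T_I(t)/ρ)·(δ·exp(−ρ·τ) + ρ − δ), and ητ(t) := (η(t)·T_U(t)·V(t)·ρ·exp(ρ·τ) + (T_I(t)·δ² − T_I(t)·δ·ρ − η(t)·T_U(t)·V(t)·δ)·(exp(ρ·τ) − 1)) / Dη(t). -/
/-- Second transformed dynamical equation: the transformed state `TIτ` satisfies
`TIτ' = ητ·TUτ·V − δτ·TIτ` at `t`. -/
theorem second_transformed_equation (δ ρ : ℝ) (η TU TI V : ℝ → ℝ) (hρ : ρ ≠ 0)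
    (τ t : ℝ)
    (hDδ : (ρ - δ) * Real.exp (ρ * τ) + δ ≠ 0)
    (hTI : ∀ t, HasDerivAt TI (η t * TU t * V t - δ * TI t) t)
    (hD : V t * ((TI t * δ + TU t * ρ) * Real.exp (ρ * τ) - TI t * δ) ≠ 0) :
    HasDerivAt
      (fun s => (TI s / ρ) * (δ * Real.exp (-ρ * τ) + ρ - δ))
      (((η t * TU t * V t * ρ * Real.exp (ρ * τ)
            + (TI t * δ ^ 2 - TI t * δ * ρ - η t * TU t * V t * δ)
              * (Real.exp (ρ * τ) - 1))
          / (V t * ((TI t * δ + TU t * ρ) * Real.exp (ρ * τ) - TI t * δ)))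
        * (TU t + TI t - (TI t / ρ) * (δ * Real.exp (-ρ * τ) + ρ - δ)) * V t
        - (δ * ρ / ((ρ - δ) * Real.exp (ρ * τ) + δ))
          * ((TI t / ρ) * (δ * Real.exp (-ρ * τ) + ρ - δ)))
      t := by
  have h := ((hTI t).div_const ρ).mul_const (δ * Real.exp (-ρ * τ) + ρ - δ)
  convert h using 1
  rfl
  rfl
  have hE : Real.exp (-ρ * τ) = (Real.exp (ρ * τ))⁻¹ := by
    rw [← Real.exp_neg]; ring_nf
  rw [hE]
  have hexp := Real.exp_ne_zero (ρ * τ)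
  have hD' : (TI t * δ + TU t * ρ) * Real.exp (ρ * τ) - TI t * δ ≠ 0 := right_ne_zero_of_mul hD
  have hV : V t ≠ 0 := left_ne_zero_of_mul hD
  have h1 : Real.exp (ρ * τ) * (TI t * δ + TU t * ρ) - TI t * δ ≠ 0 := by rwa [mul_comm]
  have h2 : Real.exp (ρ * τ) * (ρ - δ) + δ ≠ 0 := by rwa [mul_comm]
  field_simp
  ring
end

section
/- Third transformed dynamical equation: suppose ρ ≠ 0 and Dδ := (ρ − δ)·exp(ρ·τ) + δ ≠ 0, and suppose the differentiable functions T_I, V : ℝ → ℝ satisfy, for all t ∈ ℝ, V'(t) = N·δ·T_I(t) − c·V(t). Then for every t ∈ ℝ, the function V has derivative at t equal to Nτ·δτ·TIτ(t) − c·V(t), where Nτ := N·exp(ρ·τ), δτ := δ·ρ/Dδ, and TIτ(t) := (T_I(t)/ρ)·(δ·exp(−ρ·τ) + ρ − δ). -/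
/-- Third transformed dynamical equation: `V' = Nτ·δτ·TIτ − c·V` at every `t`. -/
theorem third_transformed_equation (δ ρ N c : ℝ) (TI V : ℝ → ℝ) (τ : ℝ)
    (hρ : ρ ≠ 0)
    (hDδ : (ρ - δ) * Real.exp (ρ * τ) + δ ≠ 0)
    (hV : ∀ t, HasDerivAt V (N * δ * TI t - c * V t) t) :
    ∀ t : ℝ,
      HasDerivAt V
        ((N * Real.exp (ρ * τ)) * (δ * ρ / ((ρ - δ) * Real.exp (ρ * τ) + δ))
            * ((TI t / ρ) * (δ * Real.exp (-ρ * τ) + ρ - δ))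
          - c * V t)
        t := by
  intro t
  have key : (N * Real.exp (ρ * τ)) * (δ * ρ / ((ρ - δ) * Real.exp (ρ * τ) + δ))
      * ((TI t / ρ) * (δ * Real.exp (-ρ * τ) + ρ - δ)) = N * δ * TI t := by
    have he : Real.exp (-(ρ * τ)) * Real.exp (ρ * τ) = 1 := by
      rw [← Real.exp_add]; ring_nf; exact Real.exp_zero
    field_simp
    rw [div_eq_iff (by rwa [mul_comm] at hDδ)]
    linear_combination N * δ * TI t * δ * he
  rw [key]
  exact hV t
end

section
/- Main indistinguishability theorem: let λ, δ, ρ, N, c be real parameters with ρ ≠ 0, let η : ℝ → ℝ, and let T_U, T_I, V : ℝ → ℝ be differentiable functions satisfying for all t ∈ ℝ: T_U'(t) = λ − ρ·T_U(t) − η(t)·T_U(t)·V(t), T_I'(t) = η(t)·T_U(t)·V(t) − δ·T_I(t), V'(t) = N·δ·T_I(t) − c·V(t). Fix τ ∈ ℝ such that Dδ := (ρ − δ)·exp(ρ·τ) + δ ≠ 0 and, for every t ∈ ℝ, Dη(t) := V(t)·((T_I(t)·δ + T_U(t)·ρ)·exp(ρ·τ) − T_I(t)·δ) ≠ 0. Then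 the transformed states TUτ, TIτ, V are differentiable and satisfy for all t ∈ ℝ: TUτ'(t) = λ − ρ·TUτ(t) − ητ(t)·TUτ(t)·V(t), TIτ'(t) = ητ(t)·TUτ(t)·V(t) − δτ·TIτ(t), V'(t) = Nτ·δτ·TIτ(t) − c·V(t); moreover the outputs coincide: TUτ(t) + TIτ(t) = T_U(t) + T_I(t) for all t. Here δτ := δ·ρ/Dδ, Nτ := N·exp(ρ·τ), TUτ(t) := T_U(t) + T_I(t) − (T_I(t)/ρ)·(δ·exp(−ρ·τ) + ρ − δ), TIτ(t) := (T_I(t)/ρ)·(δ·exp(−ρ·τ) + ρ − δ), and ητ(t) := (η(t)·T_U(t)·V(t)·ρ·exp(ρ·τ) + (T_I(t)·δ² − T_I(t)·δ·ρ − η(t)·T_U(t)·V(t)·δ)·(exp(ρ·τ) − 1)) / Dη(t). -/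
/-- Main indistinguishability theorem: the transformed states and parameters
satisfy the same ODE structure and produce the same outputs as the original ones. -/
theorem main_indistinguishability (lam δ ρ N c : ℝ) (η TU TI V : ℝ → ℝ)
    (hρ : ρ ≠ 0)
    (hTU : ∀ t, HasDerivAt TU (lam - ρ * TU t - η t * TU t * V t) t)
    (hTI : ∀ t, HasDerivAt TI (η t * TU t * V t - δ * TI t) t)
    (hV : ∀ t, HasDerivAt V (N * δ * TI t - c * V t) t)
    (τ : ℝ)
    (hDδ : (ρ - δ) * Real.exp (ρ * τ) + δ ≠ 0)
    (hDη : ∀ t, V t * ((TI t * δ + TU t * ρ) * Real.exp (ρ * τ) - TI t * δ) ≠ 0) :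
    -- abbreviations for the transformed quantities
    (fun TUτ : ℝ → ℝ => fun TIτ : ℝ → ℝ => fun ητ : ℝ → ℝ =>
      fun δτ : ℝ => fun Nτ : ℝ =>
      (∀ t, HasDerivAt TUτ (lam - ρ * TUτ t - ητ t * TUτ t * V t) t) ∧
      (∀ t, HasDerivAt TIτ (ητ t * TUτ t * V t - δτ * TIτ t) t) ∧
      (∀ t, HasDerivAt V (Nτ * δτ * TIτ t - c * V t) t) ∧
      (∀ t, TUτ t + TIτ t = TU t + TI t))
    (fun t => TU t + TI t - (TI t / ρ) * (δ * Real.exp (-ρ * τ) + ρ - δ))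
    (fun t => (TI t / ρ) * (δ * Real.exp (-ρ * τ) + ρ - δ))
    (fun t =>
      (η t * TU t * V t * ρ * Real.exp (ρ * τ)
          + (TI t * δ ^ 2 - TI t * δ * ρ - η t * TU t * V t * δ)
            * (Real.exp (ρ * τ) - 1))
        / (V t * ((TI t * δ + TU t * ρ) * Real.exp (ρ * τ) - TI t * δ)))
    (δ * ρ / ((ρ - δ) * Real.exp (ρ * τ) + δ))
    (N * Real.exp (ρ * τ)) := by
  have hneg : Real.exp (-ρ * τ) = (Real.exp (ρ * τ))⁻¹ := by
    rw [neg_mul, Real.exp_neg]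
  have he : Real.exp (ρ * τ) ≠ 0 := Real.exp_ne_zero _
  refine ⟨fun t => ?_, fun t => ?_, fun t => ?_, fun t => by ring⟩
  · obtain ⟨hV0, hA⟩ := mul_ne_zero_iff.mp (hDη t)
    have h := ((hTU t).add (hTI t)).sub
      (((hTI t).div_const ρ).mul_const (δ * Real.exp (-ρ * τ) + ρ - δ))
    refine h.congr_deriv ?_
    rw [hneg]
    have h1 : Real.exp (ρ * τ) * (δ * TI t + ρ * TU t) - δ * TI t ≠ 0 := by
      contrapose! hA; linarith
    have h1' : Real.exp (ρ * τ) * (δ * TI t + TU t * ρ) - δ * TI t ≠ 0 := by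
      contrapose! hA; linarith
    field_simp
    ring
  · obtain ⟨hV0, hA⟩ := mul_ne_zero_iff.mp (hDη t)
    have h := ((hTI t).div_const ρ).mul_const (δ * Real.exp (-ρ * τ) + ρ - δ)
    refine h.congr_deriv ?_
    rw [hneg]
    have h1 : Real.exp (ρ * τ) * (δ * TI t + ρ * TU t) - δ * TI t ≠ 0 := by
      contrapose! hA; linarith
    have h1' : Real.exp (ρ * τ) * (δ * TI t + TU t * ρ) - δ * TI t ≠ 0 := by
      contrapose! hA; linarith
    have h2 : Real.exp (ρ * τ) * (ρ - δ) + δ ≠ 0 := by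
      contrapose! hDδ; linarith
    field_simp
    ring
  · convert hV t using 1
    rw [hneg]
    have h2 : Real.exp (ρ * τ) * (ρ - δ) + δ ≠ 0 := by
      contrapose! hDδ; linarith
    field_simp
    ring
end

section
/- Second-member simplification of the second transformed equation: let δ, ρ, τ, T_U, T_I, V, η be real numbers with ρ ≠ 0, Dδ := (ρ − δ)·exp(ρ·τ) + δ ≠ 0 and Dη := V·((T_I·δ + T_U·ρ)·exp(ρ·τ) − T_I·δ) ≠ 0. Set δτ := δ·ρ/Dδ, TUτ := T_U + T_I − (T_I/ρ)·(δ·exp(−ρ·τ) + ρ − δ), TIτ := (T_I/ρ)·(δ·exp(−ρ·τ) + ρ − δ), and ητ := (η·T_U·V·ρ·exp(ρ·τ) + (T_I·δ² − T_I·δ·ρ − η·T_U·V·δ)·(exp(ρ·τ) − 1))/Dη. Then ητ·TUτ·V − δτ·TIτ = −(exp(−ρ·τ)·(T_I·δ − T_U·V·η)·(δ − δ·exp(ρ·τ) + ρ·exp(ρ·τ)))/ρ. -/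
/-- Second-member simplification of the second transformed equation. -/
theorem second_second_member_simplification (δ ρ τ TU TI V η : ℝ) (hρ : ρ ≠ 0)
    (hDδ : (ρ - δ) * Real.exp (ρ * τ) + δ ≠ 0)
    (hDη : V * ((TI * δ + TU * ρ) * Real.exp (ρ * τ) - TI * δ) ≠ 0) :
    ((η * TU * V * ρ * Real.exp (ρ * τ)
          + (TI * δ ^ 2 - TI * δ * ρ - η * TU * V * δ) * (Real.exp (ρ * τ) - 1))
        / (V * ((TI * δ + TU * ρ) * Real.exp (ρ * τ) - TI * δ)))
      * (TU + TI - (TI / ρ) * (δ * Real.exp (-ρ * τ) + ρ - δ)) * V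
      - (δ * ρ / ((ρ - δ) * Real.exp (ρ * τ) + δ))
        * ((TI / ρ) * (δ * Real.exp (-ρ * τ) + ρ - δ))
    = -(Real.exp (-ρ * τ) * (TI * δ - TU * V * η)
        * (δ - δ * Real.exp (ρ * τ) + ρ * Real.exp (ρ * τ))) / ρ := by
  have hE : Real.exp (ρ * τ) ≠ 0 := Real.exp_ne_zero _
  have hneg : Real.exp (-ρ * τ) = (Real.exp (ρ * τ))⁻¹ := by
    rw [← Real.exp_neg]; ring_nf
  rw [hneg]
  have hDδ' : Real.exp (ρ * τ) * (ρ - δ) + δ ≠ 0 := by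
    intro h; apply hDδ; linear_combination h
  have hDη' : V * (Real.exp (ρ * τ) * (TI * δ + TU * ρ) - TI * δ) ≠ 0 := by
    intro h; apply hDη; linear_combination h
  have hV : V ≠ 0 := left_ne_zero_of_mul hDη'
  have hDη'' : Real.exp (ρ * τ) * (TI * δ + TU * ρ) - TI * δ ≠ 0 := right_ne_zero_of_mul hDη'
  field_simp
  ring
end

section
/- Deviation formula for the transformed time-varying parameter: let δ, ρ, τ, T_U, T_I, V, η be real numbers with Dη := V·((T_I·δ + T_U·ρ)·exp(ρ·τ) − T_I·δ) ≠ 0, and set ητ := (η·T_U·V·ρ·exp(ρ·τ) + (T_I·δ² − T_I·δ·ρ − η·T_U·V·δ)·(exp(ρ·τ) − 1))/Dη. Then ητ − η = δ·(exp(ρ·τ) − 1)·(T_I·δ − T_I·ρ − η·V·(T_U + T_I))/Dη. In particular, if additionally δ ≠ 0, ρ ≠ 0, τ ≠ 0 and T_I·(δ − ρ) ≠ η·V·(T_U + T_I), then ητ ≠ η. -/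
/-- Deviation formula for the transformed time-varying parameter, and
non-identifiability of η. -/
theorem eta_deviation_formula (δ ρ τ TU TI V η : ℝ)
    (hD : V * ((TI * δ + TU * ρ) * Real.exp (ρ * τ) - TI * δ) ≠ 0) :
    ((η * TU * V * ρ * Real.exp (ρ * τ)
          + (TI * δ ^ 2 - TI * δ * ρ - η * TU * V * δ) * (Real.exp (ρ * τ) - 1))
        / (V * ((TI * δ + TU * ρ) * Real.exp (ρ * τ) - TI * δ)) - η
      = δ * (Real.exp (ρ * τ) - 1) * (TI * δ - TI * ρ - η * V * (TU + TI))
          / (V * ((TI * δ + TU * ρ) * Real.exp (ρ * τ) - TI * δ)))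
    ∧ (δ ≠ 0 → ρ ≠ 0 → τ ≠ 0 → TI * (δ - ρ) ≠ η * V * (TU + TI) →
        (η * TU * V * ρ * Real.exp (ρ * τ)
            + (TI * δ ^ 2 - TI * δ * ρ - η * TU * V * δ) * (Real.exp (ρ * τ) - 1))
          / (V * ((TI * δ + TU * ρ) * Real.exp (ρ * τ) - TI * δ)) ≠ η) := by
  have h1 : ((η * TU * V * ρ * Real.exp (ρ * τ)
          + (TI * δ ^ 2 - TI * δ * ρ - η * TU * V * δ) * (Real.exp (ρ * τ) - 1))
        / (V * ((TI * δ + TU * ρ) * Real.exp (ρ * τ) - TI * δ)) - η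
      = δ * (Real.exp (ρ * τ) - 1) * (TI * δ - TI * ρ - η * V * (TU + TI))
          / (V * ((TI * δ + TU * ρ) * Real.exp (ρ * τ) - TI * δ))) := by
    rw [eq_div_iff hD, sub_mul, div_mul_cancel₀ _ hD]
    ring
  refine ⟨h1, fun hδ hρ hτ hne => ?_⟩
  intro heq
  have hx : δ * (Real.exp (ρ * τ) - 1) * (TI * δ - TI * ρ - η * V * (TU + TI))
      / (V * ((TI * δ + TU * ρ) * Real.exp (ρ * τ) - TI * δ)) = 0 := by
    rw [← h1, heq]; ring
  have he : Real.exp (ρ * τ) - 1 ≠ 0 := by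
    have : Real.exp (ρ * τ) ≠ 1 := by
      rw [Ne, Real.exp_eq_one_iff]
      exact mul_ne_zero hρ hτ
    exact sub_ne_zero_of_ne this
  have hnum : TI * δ - TI * ρ - η * V * (TU + TI) ≠ 0 := by
    intro h
    apply hne
    linarith [h]
  exact (div_ne_zero (mul_ne_zero (mul_ne_zero hδ he) hnum) hD) hx
end

section
/- Non-identifiability theorem (existence form): let λ, δ, ρ, N, c be real numbers with ρ ≠ 0, δ ≠ 0, δ ≠ ρ, N ≠ 0, let η : ℝ → ℝ, and let T_U, T_I, V : ℝ → ℝ be differentiable and satisfy for all t: T_U'(t) = λ − ρ·T_U(t) − η(t)·T_U(t)·V(t), T_I'(t) = η(t)·T_U(t)·V(t) − δ·T_I(t), V'(t) = N·δ·T_I(t) − c·V(t). Let τ ≠ 0 be such that (ρ − δ)·exp(ρ·τ) + δ ≠ 0 and, for all t ∈ ℝ, V(t)·((T_I(t)·δ + T_U(t)·ρ)·exp(ρ·τ) − T_I(t)·δ) ≠ 0. Then there exist real numbers δ', N' and functions η', T_U'', T_I'' : ℝ → ℝ such that δ' ≠ δ, N' ≠ N, the functions T_U'', T_I'', V are differentiable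 and satisfy (T_U'')'(t) = λ − ρ·T_U''(t) − η'(t)·T_U''(t)·V(t), (T_I'')'(t) = η'(t)·T_U''(t)·V(t) − δ'·T_I''(t), V'(t) = N'·δ'·T_I''(t) − c·V(t) for all t, and the outputs coincide: T_U''(t) + T_I''(t) = T_U(t) + T_I(t) for all t. In particular the parameters δ and N of the model are not identifiable from the outputs y₁ = V and y₂ = T_U + T_I. -/
/-- Non-identifiability theorem (existence form): there exist distinct parameter
values δ' ≠ δ, N' ≠ N, together with a time-varying parameter η' and states
T_U'', T_I'', producing exactly the same outputs. -/
theorem non_identifiability_existence (lam δ ρ N c : ℝ) (η TU TI V : ℝ → ℝ)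
    (hρ : ρ ≠ 0) (hδ : δ ≠ 0) (hδρ : δ ≠ ρ) (hN : N ≠ 0)
    (hTU : ∀ t, HasDerivAt TU (lam - ρ * TU t - η t * TU t * V t) t)
    (hTI : ∀ t, HasDerivAt TI (η t * TU t * V t - δ * TI t) t)
    (hV : ∀ t, HasDerivAt V (N * δ * TI t - c * V t) t)
    (τ : ℝ) (hτ : τ ≠ 0)
    (hDδ : (ρ - δ) * Real.exp (ρ * τ) + δ ≠ 0)
    (hDη : ∀ t, V t * ((TI t * δ + TU t * ρ) * Real.exp (ρ * τ) - TI t * δ) ≠ 0) :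
    ∃ (δ' N' : ℝ) (η' TU2 TI2 : ℝ → ℝ),
      δ' ≠ δ ∧ N' ≠ N ∧
      (∀ t, HasDerivAt TU2 (lam - ρ * TU2 t - η' t * TU2 t * V t) t) ∧
      (∀ t, HasDerivAt TI2 (η' t * TU2 t * V t - δ' * TI2 t) t) ∧
      (∀ t, HasDerivAt V (N' * δ' * TI2 t - c * V t) t) ∧
      (∀ t, TU2 t + TI2 t = TU t + TI t) := by
  set e := Real.exp (ρ * τ) with he
  have he0 : e ≠ 0 := Real.exp_ne_zero _
  have he1 : e ≠ 1 := by
    rw [he, Ne, Real.exp_eq_one_iff]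
    exact mul_ne_zero hρ hτ
  set D : ℝ := (ρ - δ) * e + δ with hDdef
  have hD : D ≠ 0 := hDδ
  set k : ℝ := D / (ρ * e) with hk
  have hρe : ρ * e ≠ 0 := mul_ne_zero hρ he0
  have hknz : k ≠ 0 := div_ne_zero hD hρe
  set δ' : ℝ := δ * ρ / D with hδ'
  -- key identity: TU2 t = ((TI t * δ + TU t * ρ) * e - TI t * δ) / (ρ * e)
  have hTU2eq : ∀ t, TU t + (1 - k) * TI t
      = ((TI t * δ + TU t * ρ) * e - TI t * δ) / (ρ * e) := by
    intro t
    rw [hk, hDdef]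
    field_simp
    ring
  have hVne : ∀ t, V t ≠ 0 := fun t => fun h => hDη t (by rw [h]; ring)
  have hTU2ne : ∀ t, TU t + (1 - k) * TI t ≠ 0 := by
    intro t
    rw [hTU2eq t]
    have hX : (TI t * δ + TU t * ρ) * e - TI t * δ ≠ 0 := by
      intro h
      exact hDη t (by rw [h, mul_zero])
    exact div_ne_zero hX hρe
  have hdenom : ∀ t, (TU t + (1 - k) * TI t) * V t ≠ 0 :=
    fun t => mul_ne_zero (hTU2ne t) (hVne t)
  -- the key algebraic relation: ρ * (1 - k) + δ' * k = δ
  have hkey : ρ * (1 - k) + δ' * k = δ := by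
    rw [hk, hδ']
    field_simp
    rw [hDdef]
    ring
  refine ⟨δ', N * e,
    fun t => (k * (η t * TU t * V t) + k * (δ' - δ) * TI t) /
      ((TU t + (1 - k) * TI t) * V t),
    fun t => TU t + (1 - k) * TI t,
    fun t => k * TI t, ?_, ?_, ?_, ?_, ?_, ?_⟩
  · -- δ' ≠ δ
    rw [hδ']
    intro h
    rw [div_eq_iff hD] at h
    have h2 : δ * ((ρ - δ) * (e - 1)) = 0 := by rw [hDdef] at h; nlinarith [h]
    rcases mul_eq_zero.1 h2 with h3 | h3
    · exact hδ h3
    · rcases mul_eq_zero.1 h3 with h4 | h4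
      · exact hδρ (by linarith)
      · exact he1 (by linarith)
  · -- N' ≠ N
    intro h
    have : N * (e - 1) = 0 := by nlinarith [h]
    rcases mul_eq_zero.1 this with h3 | h3
    · exact hN h3
    · exact he1 (by linarith)
  · -- TU2 equation
    intro t
    have hd : HasDerivAt (fun t => TU t + (1 - k) * TI t) _ t := (hTU t).add ((hTI t).const_mul (1 - k))
    convert hd using 1
    have hden := hdenom t
    have hη' : (k * (η t * TU t * V t) + k * (δ' - δ) * TI t) /
        ((TU t + (1 - k) * TI t) * V t) * (TU t + (1 - k) * TI t) * V t
        = k * (η t * TU t * V t) + k * (δ' - δ) * TI t := by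
      rw [mul_assoc, div_mul_cancel₀ _ hden]
    rw [hη']
    linear_combination (-TI t) * hkey
  · -- TI2 equation
    intro t
    have hd : HasDerivAt (fun t => k * TI t) _ t := (hTI t).const_mul k
    convert hd using 1
    have hden := hdenom t
    have hη' : (k * (η t * TU t * V t) + k * (δ' - δ) * TI t) /
        ((TU t + (1 - k) * TI t) * V t) * (TU t + (1 - k) * TI t) * V t
        = k * (η t * TU t * V t) + k * (δ' - δ) * TI t := by
      rw [mul_assoc, div_mul_cancel₀ _ hden]
    rw [hη']
    ring
  · -- V equation
    intro t
    have : N * e * δ' * (k * TI t) = N * δ * TI t := by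
      rw [hδ', hk]
      field_simp
    rw [this]
    exact hV t
  · intro t; ring
end

section
/- Corrected output relation (corrected Equation (6.23)): let λ, δ, ρ, N, c be real numbers, let η : ℝ → ℝ be differentiable, and let T_U, T_I, V : ℝ → ℝ be twice differentiable and satisfy for all t: T_U'(t) = λ − ρ·T_U(t) − η(t)·T_U(t)·V(t), T_I'(t) = η(t)·T_U(t)·V(t) − δ·T_I(t), V'(t) = N·δ·T_I(t) − c·V(t). Define y₁ := T_U + T_I and y₂ := V (both twice differentiable). Then for every t ∈ ℝ: y₁''·y₂·y₂' − y₁'·y₂·y₂'' − δ·y₁·y₂·y₂'' + λ·y₂·y₂'' − (δ + c)·y₁'·y₂·y₂' + (δ·ρ − δ² − δ·c)·y₁·y₂·y₂' + (ρ + δ)·y₁'·y₂·y₂' + λ·c·y₂·y₂' + ρ·c·y₁'·y₂² + (ρ·δ·c − δ²·c)·y₁·y₂² − N·δ·y₁·y₁''·y₂ + c·y₁''·y₂² − N·δ·(ρ + δ)·y₁·y₁'·y₂ − N·δ²·ρ·y₁²·y₂ + N·δ²·λ·y₁·y₂ = 0, where all functions and derivatives are evaluated at t. -/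
/-- Corrected output relation (corrected Equation (6.23) of Miao et al. 2011):
the η-free polynomial differential relation satisfied by the outputs
`y₁ = T_U + T_I` and `y₂ = V` of the HIV model. -/
theorem corrected_output_relation (lam δ ρ N c : ℝ) (η TU TI V : ℝ → ℝ)
    (hη : Differentiable ℝ η)
    (hTU : ∀ t, HasDerivAt TU (lam - ρ * TU t - η t * TU t * V t) t)
    (hTI : ∀ t, HasDerivAt TI (η t * TU t * V t - δ * TI t) t)
    (hV : ∀ t, HasDerivAt V (N * δ * TI t - c * V t) t) :
    ∀ t : ℝ,
      (fun y₁ y₂ : ℝ → ℝ =>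
        deriv (deriv y₁) t * y₂ t * deriv y₂ t
          - deriv y₁ t * y₂ t * deriv (deriv y₂) t
          - δ * y₁ t * y₂ t * deriv (deriv y₂) t
          + lam * y₂ t * deriv (deriv y₂) t
          - (δ + c) * deriv y₁ t * y₂ t * deriv y₂ t
          + (δ * ρ - δ ^ 2 - δ * c) * y₁ t * y₂ t * deriv y₂ t
          + (ρ + δ) * deriv y₁ t * y₂ t * deriv y₂ t
          + lam * c * y₂ t * deriv y₂ t
          + ρ * c * deriv y₁ t * (y₂ t) ^ 2
          + (ρ * δ * c - δ ^ 2 * c) * y₁ t * (y₂ t) ^ 2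
          - N * δ * y₁ t * deriv (deriv y₁) t * y₂ t
          + c * deriv (deriv y₁) t * (y₂ t) ^ 2
          - N * δ * (ρ + δ) * y₁ t * deriv y₁ t * y₂ t
          - N * δ ^ 2 * ρ * (y₁ t) ^ 2 * y₂ t
          + N * δ ^ 2 * lam * y₁ t * y₂ t
          = 0)
      (fun s => TU s + TI s) V := by
  intro t
  have hy1 : ∀ s, HasDerivAt (fun s => TU s + TI s) (lam - ρ * TU s - δ * TI s) s := by
    intro s
    have h := (hTU s).add (hTI s)
    exact h.congr_deriv (by ring)
  have hd1 : deriv (fun s => TU s + TI s) = fun s => lam - ρ * TU s - δ * TI s :=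
    funext fun s => (hy1 s).deriv
  have hd2 : deriv V = fun s => N * δ * TI s - c * V s :=
    funext fun s => (hV s).deriv
  have hy1'' : HasDerivAt (fun s => lam - ρ * TU s - δ * TI s)
      (0 - ρ * (lam - ρ * TU t - η t * TU t * V t) - δ * (η t * TU t * V t - δ * TI t)) t :=
    ((hasDerivAt_const t lam).sub ((hTU t).const_mul ρ)).sub ((hTI t).const_mul δ)
  have hy2'' : HasDerivAt (fun s => N * δ * TI s - c * V s)
      (N * δ * (η t * TU t * V t - δ * TI t) - c * (N * δ * TI t - c * V t)) t :=
    ((hTI t).const_mul (N * δ)).sub ((hV t).const_mul c)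
  simp only [hd1, hd2, hy1''.deriv, hy2''.deriv]
  ring
end
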